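/- arXiv:1403.4174 — 4 statements merged into one kernel-verified Lean document; each statement's English description precedes it below -/
import Mathlib

section
/- Let T = (S, s_init, R, AP, L) be a labeled transition system and B = (Q, q_init, 2^{AP}, δ, F) a Büchi automaton, and let P = T ⊗ B be their product. If p = (s_1,q_1)(s_2,q_2)… is an accepting run of P over a word w ∈ (2^{AP})^ω, witnessed by a sequence w_ε ∈ (2^{AP} ∪ {ε})^ω whose subsequence of non-ε elements is w, then the alternating sequence τ = s_1 ϖ_1 s_2 ϖ_2 … with ϖ_i = w_ε(i) is a valid trace of T, and the word produced by τ equals w. -/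
/-- A labeled transition system `T = (S, s_init, R, AP, L)`. -/
structure TS (S AP : Type*) where
  init : S
  R : S → S → Prop
  L : S → Set AP

/-- A Büchi automaton `B = (Q, q_init, A, δ, F)` over alphabet `A`. -/
structure BA (Q A : Type*) where
  init : Q
  δ : Q → A → Q → Prop
  F : Set Q

/-- `w` is the subsequence of non-silent (non-`none`) elements of `wε`,
where the silent symbol ε is modeled by `none`. -/
def IsNonSilentSubseq {A : Type*} (wε : ℕ → Option A) (w : ℕ → A) : Prop :=
  ∃ φ : ℕ → ℕ, StrictMono φ ∧ (∀ k, wε (φ k) = some (w k)) ∧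
    ∀ i, i ∉ Set.range φ → wε i = none

/-- `τ = s_1 ϖ_1 s_2 ϖ_2 …` (given by its state sequence `τs` and service
sequence `τw`, where `none` denotes the silent service ε) is a trace of `T`. -/
def TS.IsTrace {S AP : Type*} (T : TS S AP) (τs : ℕ → S) (τw : ℕ → Option (Set AP)) : Prop :=
  τs 0 = T.init ∧
  ∀ i, (τs i = τs (i + 1) ∧ ∃ ς, τw i = some ς ∧ ς ⊆ T.L (τs i)) ∨
       (T.R (τs i) (τs (i + 1)) ∧ τw i = none)

/-- The transition relation of the product automaton `P = T ⊗ B`. -/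
def ProdTrans {S Q AP : Type*} (T : TS S AP) (B : BA Q (Set AP)) :
    S × Q → Option (Set AP) → S × Q → Prop := fun p σ p' =>
  (T.R p.1 p'.1 ∧ σ = none ∧ p.2 = p'.2) ∨
  (p.1 = p'.1 ∧ ∃ ς, σ = some ς ∧ ς ⊆ T.L p.1 ∧ B.δ p.2 ς p'.2)

theorem ProdTrans.projects_to_trace_step {S Q AP : Type*} {T : TS S AP} {B : BA Q (Set AP)}
    {p p' : S × Q} {σ : Option (Set AP)} (h : ProdTrans T B p σ p') :
    (p.1 = p'.1 ∧ ∃ ς, σ = some ς ∧ ς ⊆ T.L p.1) ∨ (T.R p.1 p'.1 ∧ σ = none) := by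
  rcases h with ⟨hR, hσ, -⟩ | ⟨hs, ς, hς, hsub, -⟩
  · exact .inr ⟨hR, hσ⟩
  · exact .inl ⟨hs, ς, hς, hsub⟩

theorem TS.isTrace_fst_of_prodTrans {S Q AP : Type*} (T : TS S AP) (B : BA Q (Set AP))
    (p : ℕ → S × Q) (wε : ℕ → Option (Set AP)) (hinit : (p 0).1 = T.init)
    (hstep : ∀ i, ProdTrans T B (p i) (wε i) (p (i + 1))) :
    T.IsTrace (fun i => (p i).1) wε :=
  ⟨hinit, fun i => (hstep i).projects_to_trace_step⟩

theorem IsNonSilentSubseq.infinite_setOf_ne_none {A : Type*} {wε : ℕ → Option A} {w : ℕ → A}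
    (h : IsNonSilentSubseq wε w) : {i | wε i ≠ none}.Infinite := by
  obtain ⟨φ, hφ, hsome, -⟩ := h
  refine (Set.infinite_range_of_injective hφ.injective).mono ?_
  rintro _ ⟨k, rfl⟩
  simp [hsome k]

theorem product_run_projects_to_valid_trace_general
    {S Q AP : Type*} (T : TS S AP) (B : BA Q (Set AP))
    (w : ℕ → Set AP) (p : ℕ → S × Q) (wε : ℕ → Option (Set AP))
    (hinit : p 0 = (T.init, B.init))
    (hwit : IsNonSilentSubseq wε w)
    (hstep : ∀ i, ProdTrans T B (p i) (wε i) (p (i + 1))) :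
    T.IsTrace (fun i => (p i).1) wε ∧
    {i | wε i ≠ none}.Infinite ∧
    IsNonSilentSubseq wε w :=
  ⟨T.isTrace_fst_of_prodTrans B p wε (by rw [hinit]) hstep, hwit.infinite_setOf_ne_none, hwit⟩

/-- If `p = (s_1,q_1)(s_2,q_2)…` is an accepting run of the product
`P = T ⊗ B` over a word `w ∈ (2^{AP})^ω`, witnessed by a sequence `wε` whose
subsequence of non-ε elements is `w`, then the alternating sequence
`τ = s_1 ϖ_1 s_2 ϖ_2 …` with `ϖ_i = wε(i)` is a valid trace of `T`, and the word
produced by `τ` equals `w`. -/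
theorem product_run_projects_to_valid_trace
    {S Q AP : Type*} (T : TS S AP) (B : BA Q (Set AP))
    (w : ℕ → Set AP) (p : ℕ → S × Q) (wε : ℕ → Option (Set AP))
    (hinit : p 0 = (T.init, B.init))
    (hwit : IsNonSilentSubseq wε w)
    (hstep : ∀ i, ProdTrans T B (p i) (wε i) (p (i + 1)))
    (hacc : ∀ N, ∃ i ≥ N, (p i).2 ∈ B.F) :
    T.IsTrace (fun i => (p i).1) wε ∧
    {i | wε i ≠ none}.Infinite ∧
    IsNonSilentSubseq wε w :=
  product_run_projects_to_valid_trace_general T B w p wε hinit hwit hstep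
end

section
/- Let T = (S, s_init, R, AP, L) be a labeled transition system, B = (Q, q_init, 2^{AP}, δ, F) a Büchi automaton, and P = T ⊗ B their product. If p = (s_1,q_1)(s_2,q_2)… is an accepting run of P over a word w ∈ (2^{AP})^ω, witnessed by w_ε whose subsequence of non-ε elements is w, then the sequence obtained from q_1 q_2 q_3 … by deleting, for each i with w_ε(i) = ε, the entry q_{i+1} (note q_i = q_{i+1} in that case) is an accepting run of B over w; in particular w ∈ L(B). -/
/-- `ρ` is a run of the Büchi automaton `B` over the infinite word `w`. -/
def BA.IsRun {Q A : Type*} (B : BA Q A) (w : ℕ → A) (ρ : ℕ → Q) : Prop :=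
  ρ 0 = B.init ∧ ∀ i, B.δ (ρ i) (w i) (ρ (i + 1))

/-- `ρ` visits the accepting set `F` infinitely often. -/
def BA.IsAccepting {Q A : Type*} (B : BA Q A) (ρ : ℕ → Q) : Prop :=
  ∀ N, ∃ i ≥ N, ρ i ∈ B.F

/-- `w ∈ L(B)`: some accepting run of `B` over `w` exists. -/
def BA.Lang {Q A : Type*} (B : BA Q A) (w : ℕ → A) : Prop :=
  ∃ ρ, B.IsRun w ρ ∧ B.IsAccepting ρ


theorem StrictMono.count_range_apply {φ : ℕ → ℕ} [DecidablePred (· ∈ Set.range φ)]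
    (hφ : StrictMono φ) (k : ℕ) : Nat.count (· ∈ Set.range φ) (φ k) = k := by
  have hinf : (Set.ofPred (· ∈ Set.range φ)).Infinite :=
    Set.infinite_range_of_injective hφ.injective
  have hφ_eq_nth : Set.EqOn φ (Nat.nth (· ∈ Set.range φ)) _ :=
    Nat.eq_nth_of_strictMonoOn_of_mapsTo_of_surjOn φ
      (fun _ ⟨k, hk⟩ => ⟨k, fun hfin => absurd hfin hinf, hk⟩) (fun k _ => ⟨k, rfl⟩)
      (hφ.strictMonoOn _)
  rw [hφ_eq_nth (fun hfin => absurd hfin hinf), Nat.count_nth_of_infinite hinf]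

theorem StrictMono.count_range_apply_add_one {φ : ℕ → ℕ} [DecidablePred (· ∈ Set.range φ)]
    (hφ : StrictMono φ) (k : ℕ) : Nat.count (· ∈ Set.range φ) (φ k + 1) = k + 1 := by
  rw [Nat.count_succ, if_pos ⟨k, rfl⟩, hφ.count_range_apply]

/-- `q` with the entry `q (i + 1)` deleted for every `i` outside the range of `φ`. -/
def dropSilent {α : Type*} (q : ℕ → α) (φ : ℕ → ℕ) : ℕ → α :=
  Stream'.cons (q 0) fun k => q (φ k + 1)

section dropSilent

variable {α : Type*} {q : ℕ → α} {φ : ℕ → ℕ} [DecidablePred (· ∈ Set.range φ)]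

theorem eq_dropSilent_count (hφ : StrictMono φ) (hq : ∀ i, i ∉ Set.range φ → q (i + 1) = q i)
    (j : ℕ) : q j = dropSilent q φ (Nat.count (· ∈ Set.range φ) j) := by
  induction j with
  | zero => rfl
  | succ j ih =>
    by_cases hj : j ∈ Set.range φ
    · obtain ⟨k, rfl⟩ := hj
      rw [hφ.count_range_apply_add_one]
      rfl
    · rw [Nat.count_succ, if_neg hj, hq j hj, ih]
      rfl

theorem apply_eq_dropSilent (hφ : StrictMono φ) (hq : ∀ i, i ∉ Set.range φ → q (i + 1) = q i)
    (k : ℕ) : q (φ k) = dropSilent q φ k := by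
  rw [eq_dropSilent_count hφ hq, hφ.count_range_apply]

theorem frequently_dropSilent_mem (hφ : StrictMono φ)
    (hq : ∀ i, i ∉ Set.range φ → q (i + 1) = q i) {s : Set α} (hs : ∀ N, ∃ i ≥ N, q i ∈ s) :
    ∀ N, ∃ k ≥ N, dropSilent q φ k ∈ s := by
  intro N
  obtain ⟨i, hi, hqi⟩ := hs (φ N + 1)
  refine ⟨Nat.count (· ∈ Set.range φ) i, ?_, eq_dropSilent_count hφ hq i ▸ hqi⟩
  calc N ≤ N + 1 := N.le_succ
    _ = Nat.count (· ∈ Set.range φ) (φ N + 1) := (hφ.count_range_apply_add_one N).symm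
    _ ≤ Nat.count (· ∈ Set.range φ) i := Nat.count_monotone _ hi

end dropSilent

section ProdTrans

variable {S Q AP : Type*} {T : TS S AP} {B : BA Q (Set AP)} {p p' : S × Q}

theorem ProdTrans.snd_eq_of_none (h : ProdTrans T B p none p') : p'.2 = p.2 := by
  rcases h with ⟨-, -, hq⟩ | ⟨-, ς, hς, -⟩
  · exact hq.symm
  · exact absurd hς.symm (Option.some_ne_none ς)

theorem ProdTrans.δ_of_some {σ : Set AP} (h : ProdTrans T B p (some σ) p') : B.δ p.2 σ p'.2 := by
  rcases h with ⟨-, hσ, -⟩ | ⟨-, ς, hς, -, hδ⟩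
  · exact absurd hσ (Option.some_ne_none σ)
  · rwa [Option.some_injective _ hς]

end ProdTrans

/-- If `p = (s_1,q_1)(s_2,q_2)…` is an accepting run of the product
`P = T ⊗ B` over `w`, witnessed by `wε` whose subsequence of non-ε elements is `w`
(via the index map `φ`), then the sequence obtained from `q_1 q_2 q_3 …` by deleting,
for each `i` with `wε(i) = ε`, the entry `q_{i+1}` (the remaining entries are `q_1`
followed by the entries `q_{φ(k)+1}`) is an accepting run of `B` over `w`;
in particular `w ∈ L(B)`. -/
theorem product_run_projects_to_accepting_buchi_run
    {S Q AP : Type*} (T : TS S AP) (B : BA Q (Set AP))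
    (w : ℕ → Set AP) (p : ℕ → S × Q) (wε : ℕ → Option (Set AP)) (φ : ℕ → ℕ)
    (hinit : p 0 = (T.init, B.init))
    (hφ : StrictMono φ)
    (hφw : ∀ k, wε (φ k) = some (w k))
    (hφn : ∀ i, i ∉ Set.range φ → wε i = none)
    (hstep : ∀ i, ProdTrans T B (p i) (wε i) (p (i + 1)))
    (hacc : ∀ N, ∃ i ≥ N, (p i).2 ∈ B.F) :
    B.IsRun w (fun k => match k with | 0 => (p 0).2 | (k + 1) => (p (φ k + 1)).2) ∧
    B.IsAccepting (fun k => match k with | 0 => (p 0).2 | (k + 1) => (p (φ k + 1)).2) ∧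
    B.Lang w := by
  classical
  have hsilent : ∀ i, i ∉ Set.range φ → (p (i + 1)).2 = (p i).2 := fun i hi =>
    (hφn i hi ▸ hstep i).snd_eq_of_none
  have hrun : B.IsRun w (dropSilent (fun i => (p i).2) φ) := by
    refine ⟨congrArg Prod.snd hinit, fun k => ?_⟩
    rw [← apply_eq_dropSilent hφ hsilent k]
    exact (hφw k ▸ hstep (φ k)).δ_of_some
  have hacc' : B.IsAccepting (dropSilent (fun i => (p i).2) φ) :=
    frequently_dropSilent_mem hφ hsilent hacc
  exact ⟨hrun, hacc', _, hrun, hacc'⟩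
end

section
/- Let T = (S, s_init, R, AP, L) be a labeled transition system, B = (Q, q_init, 2^{AP}, δ, F) a Büchi automaton, and P = T ⊗ B their product. For every word w ∈ L(B) such that w is the word produced by some valid trace τ of T, there exists an accepting run of P over w. -/
/-! The run of `P` follows the trace `τ` in its first component and, in its second, the
accepting run `ρ` of `B` over `w`, slowed down so that it advances only on the non-silent
letters of `τ`: at position `i` it sits at `ρ n`, where `n` counts the non-silent letters
before `i`. Since `w` is infinite, every index of `ρ` is reached, so acceptance carries
over. -/

theorem Nat.count_apply_of_strictMono {p : ℕ → Prop} [DecidablePred p] {φ : ℕ → ℕ}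
    (hφ : StrictMono φ) (hp : ∀ i, p i ↔ i ∈ Set.range φ) (k : ℕ) :
    Nat.count p (φ k) = k := by
  have hfilter : (Finset.range (φ k)).filter p = (Finset.range k).image φ := by
    ext j
    simp only [Finset.mem_filter, Finset.mem_range, Finset.mem_image, hp]
    constructor
    · rintro ⟨hj, m, rfl⟩
      exact ⟨m, hφ.lt_iff_lt.mp hj, rfl⟩
    · rintro ⟨m, hm, rfl⟩
      exact ⟨hφ hm, m, rfl⟩
  rw [Nat.count_eq_card_filter_range, hfilter, Finset.card_image_of_injective _ hφ.injective,
    Finset.card_range]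

section NonSilent

variable {A : Type*} {wε : ℕ → Option A} {w : ℕ → A}

def nonSilentCount (wε : ℕ → Option A) (i : ℕ) : ℕ :=
  Nat.count (fun j => (wε j).isSome) i

@[simp]
theorem nonSilentCount_zero : nonSilentCount wε 0 = 0 :=
  Nat.count_zero _

theorem nonSilentCount_succ_of_eq_none {i : ℕ} (hi : wε i = none) :
    nonSilentCount wε (i + 1) = nonSilentCount wε i :=
  Nat.count_succ_eq_count_iff.mpr (by simp [hi])

theorem nonSilentCount_succ_of_eq_some {i : ℕ} {a : A} (hi : wε i = some a) :
    nonSilentCount wε (i + 1) = nonSilentCount wε i + 1 :=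
  Nat.count_succ_eq_succ_count_iff.mpr (by simp [hi])

theorem nonSilentCount_apply_of_strictMono {φ : ℕ → ℕ} (hφ : StrictMono φ)
    (hsome : ∀ k, wε (φ k) = some (w k)) (hnone : ∀ i, i ∉ Set.range φ → wε i = none)
    (k : ℕ) : nonSilentCount wε (φ k) = k := by
  refine Nat.count_apply_of_strictMono hφ (fun i => ⟨fun hi => ?_, ?_⟩) k
  · by_contra hiφ
    simp [hnone i hiφ] at hi
  · rintro ⟨m, rfl⟩
    simp [hsome m]

theorem IsNonSilentSubseq.eq_of_apply_eq_some (h : IsNonSilentSubseq wε w) {i : ℕ} {a : A}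
    (hi : wε i = some a) : a = w (nonSilentCount wε i) := by
  obtain ⟨φ, hφ, hsome, hnone⟩ := h
  obtain ⟨k, rfl⟩ : i ∈ Set.range φ := by
    by_contra hiφ
    simp [hnone i hiφ] at hi
  rw [nonSilentCount_apply_of_strictMono hφ hsome hnone, ← Option.some_inj, ← hi, hsome]

theorem IsNonSilentSubseq.exists_ge_nonSilentCount_eq (h : IsNonSilentSubseq wε w) (k : ℕ) :
    ∃ i ≥ k, nonSilentCount wε i = k := by
  obtain ⟨φ, hφ, hsome, hnone⟩ := h
  exact ⟨φ k, hφ.le_apply, nonSilentCount_apply_of_strictMono hφ hsome hnone k⟩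

theorem BA.IsAccepting.comp_nonSilentCount {Q : Type*} {B : BA Q A} {ρ : ℕ → Q}
    (hρ : B.IsAccepting ρ) (h : IsNonSilentSubseq wε w) :
    B.IsAccepting (ρ ∘ nonSilentCount wε) := by
  intro N
  obtain ⟨k, hkN, hk⟩ := hρ N
  obtain ⟨i, hik, hi⟩ := h.exists_ge_nonSilentCount_eq k
  exact ⟨i, hkN.trans hik, by simpa [hi] using hk⟩

end NonSilent

theorem TS.IsTrace.prodTrans_nonSilentCount {S Q AP : Type*} {T : TS S AP}
    {B : BA Q (Set AP)} {τs : ℕ → S} {τw : ℕ → Option (Set AP)} {w : ℕ → Set AP}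
    {ρ : ℕ → Q} (hτ : T.IsTrace τs τw) (hρ : ∀ i, B.δ (ρ i) (w i) (ρ (i + 1)))
    (h : IsNonSilentSubseq τw w) (i : ℕ) :
    ProdTrans T B (τs i, ρ (nonSilentCount τw i)) (τw i)
      (τs (i + 1), ρ (nonSilentCount τw (i + 1))) := by
  rcases hτ.2 i with ⟨hstay, ς, hς, hςL⟩ | ⟨hR, hsilent⟩
  · refine Or.inr ⟨hstay, ς, hς, hςL, ?_⟩
    rw [nonSilentCount_succ_of_eq_some hς, h.eq_of_apply_eq_some hς]
    exact hρ _
  · exact Or.inl ⟨hR, hsilent, by simp [nonSilentCount_succ_of_eq_none hsilent]⟩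

/-- For every word `w ∈ L(B)` such that `w` is the word produced
by some valid trace `τ` of `T`, there exists an accepting run of the product
`P = T ⊗ B` over `w` (i.e., a sequence starting at the initial product state,
respecting the product transitions along some witness `wε` whose subsequence of
non-ε elements is `w`, and visiting `S × F` infinitely often). -/
theorem product_has_accepting_run_over_produced_word
    {S Q AP : Type*} (T : TS S AP) (B : BA Q (Set AP))
    (w : ℕ → Set AP)
    (hw : B.Lang w)
    (τs : ℕ → S) (τw : ℕ → Option (Set AP))
    (hτ : T.IsTrace τs τw)
    (hprod : IsNonSilentSubseq τw w) :
    ∃ (p : ℕ → S × Q) (wε : ℕ → Option (Set AP)),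
      p 0 = (T.init, B.init) ∧
      IsNonSilentSubseq wε w ∧
      (∀ i, ProdTrans T B (p i) (wε i) (p (i + 1))) ∧
      (∀ N, ∃ i ≥ N, (p i).2 ∈ B.F) := by
  obtain ⟨ρ, ⟨hρ0, hρ⟩, hacc⟩ := hw
  exact ⟨fun i => (τs i, ρ (nonSilentCount τw i)), τw, by simp [hτ.1, hρ0], hprod,
    hτ.prodTrans_nonSilentCount hρ hprod, hacc.comp_nonSilentCount hprod⟩
end

section
/- Let T = (S, s_init, R, AP, L) be a labeled transition system, B = (Q, q_init, 2^{AP}, δ, F) a Büchi automaton, and P = T ⊗ B their product. Suppose there exist in P a finite path from the initial state (s_init, q_init) to some state q_f ∈ F_P = S × F, and a finite cycle from q_f back to q_f whose sequence of transition labels contains at least one non-ε label. Then there exists a valid trace τ of T whose produced word w(τ) belongs to L(B) (obtained by following the path and then repeating the cycle forever). -/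
/-!
Product transitions project to steps of `T` on the first component and, on the second, to steps of
`B` where the label is visible and to stutter steps where it is silent. Unrolling the lasso gives
an infinite product path whose labels are non-silent infinitely often (the cycle is repeated) and
whose `B`-component is accepting infinitely often (at every return to `q_f`). Deleting the silent
steps turns its first component into a valid trace and its second component into an accepting run
of `B` on the produced word, because `B`'s state does not change during a silent stretch.
-/

/-- The ultimately periodic sequence `u 0 ⋯ u (m - 1) (v 0 ⋯ v (l - 1))^ω`. -/
def lasso {α : Type*} (m l : ℕ) (u v : ℕ → α) (i : ℕ) : α :=
  if i < m then u i else v ((i - m) % l)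

section Lasso

variable {α β : Type*} {m l : ℕ} {u v : ℕ → α}

theorem lasso_of_lt {i : ℕ} (h : i < m) : lasso m l u v i = u i := if_pos h

theorem lasso_add (k : ℕ) : lasso m l u v (m + k) = v (k % l) := by
  simp [lasso]

theorem lasso_of_le (hv : v 0 = u m) {i : ℕ} (h : i ≤ m) : lasso m l u v i = u i := by
  rcases h.lt_or_eq with h | rfl
  · exact lasso_of_lt h
  · simpa [hv] using lasso_add (m := i) (l := l) (u := u) (v := v) 0

theorem exists_ge_lasso_eq {r : ℕ} (hr : r < l) (N : ℕ) :
    ∃ i ≥ N, lasso m l u v i = v r := by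
  refine ⟨m + (N * l + r), by nlinarith, ?_⟩
  rw [lasso_add, Nat.mul_add_mod_self_right, Nat.mod_eq_of_lt hr]

theorem lasso_step {r : α → β → α → Prop} {a b : ℕ → β} (hl : 0 < l)
    (hu : ∀ i < m, r (u i) (a i) (u (i + 1))) (hv : ∀ i < l, r (v i) (b i) (v (i + 1)))
    (hv0 : v 0 = u m) (hvl : v l = v 0) (i : ℕ) :
    r (lasso m l u v i) (lasso m l a b i) (lasso m l u v (i + 1)) := by
  rcases lt_or_ge i m with hi | hi
  · rw [lasso_of_lt hi, lasso_of_lt hi, lasso_of_le hv0 hi]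
    exact hu i hi
  · obtain ⟨k, rfl⟩ := Nat.exists_eq_add_of_le hi
    rw [add_assoc, lasso_add, lasso_add, lasso_add, ← Nat.mod_add_mod]
    have hk : k % l < l := Nat.mod_lt k hl
    rcases (show k % l + 1 ≤ l from hk).lt_or_eq with hk' | hk'
    · rw [Nat.mod_eq_of_lt hk']
      exact hv _ hk
    · rw [hk', Nat.mod_self, ← hvl]
      simpa only [hk'] using hv _ hk

end Lasso

theorem exists_isNonSilentSubseq {A : Type*} {σ : ℕ → Option A}
    (h : ∀ N, ∃ i ≥ N, σ i ≠ none) : ∃ w, IsNonSilentSubseq σ w := by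
  have hinf : {i | σ i ≠ none}.Infinite :=
    Nat.frequently_atTop_iff_infinite.1 (Filter.frequently_atTop.2 h)
  refine ⟨fun k => (σ (Nat.nth (σ · ≠ none) k)).get
      (Option.isSome_iff_ne_none.2 (Nat.nth_mem_of_infinite hinf k)), _,
    Nat.nth_strictMono hinf, fun k => by simp, fun i hi => ?_⟩
  rw [Nat.range_nth_of_infinite hinf] at hi
  simpa using hi

/-- If `q` can only change right after the positions `φ k`, then `q a` is the value of `q` at the
first such position at or after `a`. -/
theorem eq_apply_of_forall_lt_of_le {α : Type*} {q : ℕ → α} {φ : ℕ → ℕ}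
    (hφ : StrictMono φ) (hq : ∀ j, j ∉ Set.range φ → q (j + 1) = q j) {a k : ℕ}
    (hlt : ∀ k' < k, φ k' < a) (hle : a ≤ φ k) : q a = q (φ k) := by
  suffices ∀ b, a ≤ b → b ≤ φ k → q a = q b from this _ hle le_rfl
  intro b hab
  induction b, hab using Nat.le_induction with
  | base => exact fun _ => rfl
  | succ b hab ih =>
    intro hb
    have hbφ : b ∉ Set.range φ := by
      rintro ⟨k', rfl⟩
      exact (hlt k' (hφ.lt_iff_lt.1 hb)).not_ge hab
    rw [ih (Nat.le_of_succ_le hb), hq b hbφ]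

def BA.IsStutterRun {Q A : Type*} (B : BA Q A) (σ : ℕ → Option A) (q : ℕ → Q) : Prop :=
  q 0 = B.init ∧ (∀ i, σ i = none → q (i + 1) = q i) ∧
    ∀ i a, σ i = some a → B.δ (q i) a (q (i + 1))

theorem BA.IsStutterRun.lang {Q A : Type*} {B : BA Q A} {σ : ℕ → Option A} {q : ℕ → Q}
    {w : ℕ → A} (hq : B.IsStutterRun σ q) (hw : IsNonSilentSubseq σ w)
    (hacc : B.IsAccepting q) : B.Lang w := by
  obtain ⟨hq0, hsilent, hstep⟩ := hq
  obtain ⟨φ, hφ, hφw, hφsilent⟩ := hw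
  have hgap {a k : ℕ} := eq_apply_of_forall_lt_of_le (a := a) (k := k) hφ
    fun j hj => hsilent j (hφsilent j hj)
  refine ⟨q ∘ φ, ⟨?_, fun k => ?_⟩, fun N => ?_⟩
  · rw [Function.comp_apply, ← hgap (k := 0) (by simp) (Nat.zero_le _), hq0]
  · rw [Function.comp_apply, Function.comp_apply,
      ← hgap (fun k' hk' => Nat.lt_succ_of_le (hφ.monotone (Nat.le_of_lt_succ hk')))
        (hφ k.lt_succ_self)]
    exact hstep _ _ (hφw k)
  · obtain ⟨i, hi, hiF⟩ := hacc (φ N)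
    have hnext : ∃ k, i ≤ φ k := ⟨i, hφ.id_le i⟩
    refine ⟨Nat.find hnext, hφ.le_iff_le.1 (hi.trans (Nat.find_spec hnext)), ?_⟩
    rw [Function.comp_apply, ← hgap (fun k' hk' => lt_of_not_ge (Nat.find_min hnext hk'))
      (Nat.find_spec hnext)]
    exact hiF

section Product

variable {S Q AP : Type*} {T : TS S AP} {B : BA Q (Set AP)} {p : ℕ → S × Q}
  {σ : ℕ → Option (Set AP)}

theorem TS.isTrace_fst_of_prodTrans_s3 (h0 : (p 0).1 = T.init)
    (hstep : ∀ i, ProdTrans T B (p i) (σ i) (p (i + 1))) : T.IsTrace (fun i => (p i).1) σ :=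
  ⟨h0, fun i => (hstep i).symm.imp (fun ⟨h, ς, hς, hL, _⟩ => ⟨h, ς, hς, hL⟩)
    fun ⟨hR, hσ, _⟩ => ⟨hR, hσ⟩⟩

theorem BA.isStutterRun_snd_of_prodTrans (h0 : (p 0).2 = B.init)
    (hstep : ∀ i, ProdTrans T B (p i) (σ i) (p (i + 1))) :
    B.IsStutterRun σ (fun i => (p i).2) := by
  refine ⟨h0, fun i hi => ?_, fun i a ha => ?_⟩
  · rcases hstep i with ⟨-, -, h⟩ | ⟨-, ς, hς, -⟩
    · exact h.symm
    · simp [hi] at hς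
  · rcases hstep i with ⟨-, hσ, -⟩ | ⟨-, ς, hς, -, hδ⟩
    · simp [ha] at hσ
    · obtain rfl : a = ς := Option.some_inj.1 (ha.symm.trans hς)
      exact hδ

end Product

theorem lasso_in_product_gives_valid_satisfying_trace_general
    {S Q AP : Type*} (T : TS S AP) (B : BA Q (Set AP))
    (m : ℕ) (ps : ℕ → S × Q) (σs : ℕ → Option (Set AP))
    (hinit : ps 0 = (T.init, B.init))
    (hpath : ∀ i < m, ProdTrans T B (ps i) (σs i) (ps (i + 1)))
    (hF : (ps m).2 ∈ B.F)
    (l : ℕ) (cs : ℕ → S × Q) (cσ : ℕ → Option (Set AP))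
    (hc0 : cs 0 = ps m) (hcl : cs l = ps m)
    (hcyc : ∀ i < l, ProdTrans T B (cs i) (cσ i) (cs (i + 1)))
    (hns : ∃ i < l, cσ i ≠ none) :
    ∃ (τs : ℕ → S) (τw : ℕ → Option (Set AP)) (w : ℕ → Set AP),
      T.IsTrace τs τw ∧ IsNonSilentSubseq τw w ∧ B.Lang w := by
  obtain ⟨i₀, hi₀, hσi₀⟩ := hns
  have hl : 0 < l := by omega
  have hstep := lasso_step (r := ProdTrans T B) hl hpath hcyc hc0 (hcl.trans hc0.symm)
  have hp0 : lasso m l ps cs 0 = (T.init, B.init) := (lasso_of_le hc0 (Nat.zero_le m)).trans hinit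
  obtain ⟨w, hw⟩ := exists_isNonSilentSubseq (σ := lasso m l σs cσ) fun N => by
    obtain ⟨i, hi, he⟩ := exists_ge_lasso_eq hi₀ N
    exact ⟨i, hi, he ▸ hσi₀⟩
  refine ⟨_, _, w, TS.isTrace_fst_of_prodTrans_s3 (by rw [hp0]) hstep, hw,
    (BA.isStutterRun_snd_of_prodTrans (by rw [hp0]) hstep).lang hw fun N => ?_⟩
  obtain ⟨i, hi, he⟩ := exists_ge_lasso_eq (m := m) (u := ps) (v := cs) hl N
  exact ⟨i, hi, by simpa only [he, hc0] using hF⟩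

/-- Suppose the product `P = T ⊗ B` contains a finite path from the
initial state `(s_init, q_init)` to some state `q_f ∈ F_P = S × F`, and a finite
cycle from `q_f` back to `q_f` whose sequence of transition labels contains at
least one non-ε label. Then there exists a valid trace `τ` of `T` whose produced
word `w(τ)` belongs to `L(B)`. -/
theorem lasso_in_product_gives_valid_satisfying_trace
    {S Q AP : Type*} (T : TS S AP) (B : BA Q (Set AP))
    (m : ℕ) (ps : ℕ → S × Q) (σs : ℕ → Option (Set AP))
    (hinit : ps 0 = (T.init, B.init))
    (hpath : ∀ i < m, ProdTrans T B (ps i) (σs i) (ps (i + 1)))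
    (hF : (ps m).2 ∈ B.F)
    (l : ℕ) (hl : 1 ≤ l) (cs : ℕ → S × Q) (cσ : ℕ → Option (Set AP))
    (hc0 : cs 0 = ps m) (hcl : cs l = ps m)
    (hcyc : ∀ i < l, ProdTrans T B (cs i) (cσ i) (cs (i + 1)))
    (hns : ∃ i < l, cσ i ≠ none) :
    ∃ (τs : ℕ → S) (τw : ℕ → Option (Set AP)) (w : ℕ → Set AP),
      T.IsTrace τs τw ∧ IsNonSilentSubseq τw w ∧ B.Lang w :=
  lasso_in_product_gives_valid_satisfying_trace_general T B m ps σs hinit hpath hF l cs cσ hc0 hcl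
    hcyc hns
end
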